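/- arXiv:2206.08142 — 3 statements merged into one kernel-verified Lean document; each statement's English description precedes it below -/
import Mathlib

section
/- Let β > 0, Q > 0, ρ = Q/2, τ ≥ 1, and let μ be a nonnegative Radon measure on N = ℝ^{2p}×ℝ^k. Suppose ∫_N (16a² + d(n₁)²/(4τ²))^{−β−ρ} dμ(n₁) < ∞ for all a > 0. Then for each fixed δ ∈ (0,1), the quantity a^{2β} ∫_{d(n₁) ≥ δ} (16a² + d(n₁⁻¹ n)²)^{−ρ−β} dμ(n₁) tends to 0 as a → 0⁺, uniformly over n with d(n) < δ²/(2τ). -/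
open MeasureTheory

set_option maxHeartbeats 1000000 in
/-- If `μ` is a nonnegative Radon measure on the H-type group
`N = ℝ^{2p} × ℝ^k` with `∫ (16a² + d(n₁)²/(4τ²))^{−β−ρ} dμ(n₁) < ∞` for all `a > 0`,
then for each `δ ∈ (0,1)`,
`a^{2β} ∫_{d(n₁) ≥ δ} (16a² + d(n₁⁻¹ n)²)^{−ρ−β} dμ(n₁) → 0` as `a → 0⁺`,
uniformly over `n` with `d(n) < δ²/(2τ)`. -/
theorem stmt7 (p k : ℕ) (β ρ τ : ℝ) (hβ : 0 < β) (hρ : ρ = (p + k : ℝ) / 2)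
    (hτ : 1 ≤ τ)
    (B : EuclideanSpace ℝ (Fin (2*p)) →ₗ[ℝ] EuclideanSpace ℝ (Fin (2*p)) →ₗ[ℝ]
      EuclideanSpace ℝ (Fin k))
    (hB_anti : ∀ X X', B X X' = - B X' X)
    (mul : EuclideanSpace ℝ (Fin (2*p)) × EuclideanSpace ℝ (Fin k) →
      EuclideanSpace ℝ (Fin (2*p)) × EuclideanSpace ℝ (Fin k) →
      EuclideanSpace ℝ (Fin (2*p)) × EuclideanSpace ℝ (Fin k))
    (inv : EuclideanSpace ℝ (Fin (2*p)) × EuclideanSpace ℝ (Fin k) →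
      EuclideanSpace ℝ (Fin (2*p)) × EuclideanSpace ℝ (Fin k))
    (d : EuclideanSpace ℝ (Fin (2*p)) × EuclideanSpace ℝ (Fin k) → ℝ)
    (hmul : ∀ n n', mul n n' = (n.1 + n'.1, n.2 + n'.2 + (1/2 : ℝ) • B n.1 n'.1))
    (hinv : ∀ n, inv n = (-n.1, -n.2))
    (hd : ∀ n, d n = Real.sqrt (‖n.1‖^4 + 16 * ‖n.2‖^2))
    (hquasi : ∀ n n', d (mul n n') ≤ τ * (d n + d n'))
    (μ : Measure (EuclideanSpace ℝ (Fin (2*p)) × EuclideanSpace ℝ (Fin k)))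
    (hfin : ∀ a : ℝ, 0 < a →
      (∫⁻ n₁, ENNReal.ofReal ((16 * a^2 + d n₁ ^ 2 / (4 * τ^2)) ^ (-β - ρ)) ∂μ) < ⊤)
    (δ : ℝ) (hδ : δ ∈ Set.Ioo (0:ℝ) 1) :
    ∀ ε : ℝ, 0 < ε → ∃ a₀ : ℝ, 0 < a₀ ∧ ∀ a : ℝ, 0 < a → a < a₀ →
      ∀ n, d n < δ^2 / (2 * τ) →
        ENNReal.ofReal (a ^ (2 * β)) *
          (∫⁻ n₁ in {n₁ | δ ≤ d n₁},
            ENNReal.ofReal ((16 * a^2 + d (mul (inv n₁) n) ^ 2) ^ (-ρ - β)) ∂μ)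
          < ENNReal.ofReal ε := by
  intro ε hε
  obtain ⟨hδ0, hδ1⟩ := hδ
  have hτ0 : (0:ℝ) < τ := lt_of_lt_of_le one_pos hτ
  have hd0 : ∀ m, 0 ≤ d m := fun m => (hd m) ▸ Real.sqrt_nonneg _
  have hdinv : ∀ m, d (inv m) = d m := by
    intro m; rw [hinv]; rw [hd, hd]; simp
  have hρ0 : 0 ≤ ρ := by rw [hρ]; positivity
  have hs0 : 0 < β + ρ := by linarith
  set C : ℝ := 1 + 64 * τ^2 / δ^2 with hC
  have hC0 : 0 < C := by positivity
  have hCs : 0 < C ^ (β + ρ) := Real.rpow_pos_of_pos hC0 _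
  -- finiteness at a = 1
  have hJ := hfin 1 one_pos
  set J := ∫⁻ n₁, ENNReal.ofReal ((16 * (1:ℝ)^2 + d n₁ ^ 2 / (4 * τ^2)) ^ (-β - ρ)) ∂μ
    with hJdef
  set Mr := J.toReal with hMrdef
  have hMr : 0 ≤ Mr := ENNReal.toReal_nonneg
  set a₀ : ℝ := (ε / (C ^ (β + ρ) * (Mr + 1))) ^ (1 / (2 * β)) with ha₀def
  have ha₀pos : 0 < a₀ := Real.rpow_pos_of_pos (by positivity) _
  refine ⟨a₀, ha₀pos, ?_⟩
  intro a ha haa₀ n hn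
  -- measurability of the set
  have hdc : Continuous d := by
    have : d = fun m => Real.sqrt (‖m.1‖^4 + 16 * ‖m.2‖^2) := funext hd
    rw [this]; fun_prop
  have hSmeas : MeasurableSet {n₁ : EuclideanSpace ℝ (Fin (2*p)) × EuclideanSpace ℝ (Fin k) |
      δ ≤ d n₁} := measurableSet_le measurable_const hdc.measurable
  -- key pointwise bound
  have key : ∀ n₁, δ ≤ d n₁ →
      (16 * a^2 + d (mul (inv n₁) n) ^ 2) ^ (-ρ - β) ≤
        C ^ (β + ρ) * (16 * (1:ℝ)^2 + d n₁ ^ 2 / (4 * τ^2)) ^ (-β - ρ) := by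
    intro n₁ h₁
    have hBzero : ∀ X, B X X = 0 := by
      intro X
      have h2 : B X X + B X X = 0 := add_eq_zero_iff_eq_neg.mpr (hB_anti X X)
      rw [← two_smul ℝ] at h2
      exact (smul_eq_zero.mp h2).resolve_left (by norm_num)
    have hgid : mul (mul (inv n₁) n) (inv n) = inv n₁ := by
      rw [hinv, hinv, hmul, hmul]
      refine Prod.ext ?_ ?_
      · simp
      · simp only [map_add, map_neg, LinearMap.add_apply, LinearMap.neg_apply, hBzero]
        module
    have htri := hquasi (mul (inv n₁) n) (inv n)
    rw [hgid, hdinv, hdinv] at htri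
    set m := d (mul (inv n₁) n) with hmdef
    have hm0 : 0 ≤ m := hd0 _
    -- d n₁ ≤ 2 τ m
    have hkey : d n₁ ≤ 2 * τ * m := by
      have h2 : τ * d n < δ^2 / 2 := by
        have := (lt_div_iff₀ (by positivity)).mp hn
        nlinarith
      nlinarith [hd0 n]
    -- squares
    have hcdm : d n₁ ^ 2 / (4 * τ^2) ≤ m ^ 2 := by
      rw [div_le_iff₀ (by positivity)]
      nlinarith [hd0 n₁]
    have hcδ : δ^2 / (4 * τ^2) ≤ d n₁ ^ 2 / (4 * τ^2) := by
      gcongr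
    have hx : (0:ℝ) < 16 * (1:ℝ)^2 + d n₁ ^ 2 / (4 * τ^2) := by positivity
    have hxy : 16 * (1:ℝ)^2 + d n₁ ^ 2 / (4 * τ^2) ≤ C * (16 * a^2 + m ^ 2) := by
      set q : ℝ := 64 * τ^2 / δ^2 with hq
      set c : ℝ := d n₁ ^ 2 / (4 * τ^2) with hcdef
      set y : ℝ := 16 * a^2 + m ^ 2 with hy
      have h16 : q * (δ^2 / (4 * τ^2)) = 16 := by
        rw [hq]; field_simp; ring
      have h1 : (0:ℝ) ≤ q := by rw [hq]; positivity
      have h2 : 16 ≤ q * c := by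
        rw [← h16]; exact mul_le_mul_of_nonneg_left hcδ h1
      have h4 : c ≤ y := by
        have : (0:ℝ) ≤ 16 * a^2 := by positivity
        rw [hy]; linarith [hcdm]
      have h3 : q * c ≤ q * y := mul_le_mul_of_nonneg_left h4 h1
      have h5 : C * y = y + q * y := by rw [hC, hq]; ring
      rw [h5]
      linarith
    have hdivpos : (0:ℝ) < (16 * (1:ℝ)^2 + d n₁ ^ 2 / (4 * τ^2)) / C := by positivity
    have hle : (16 * (1:ℝ)^2 + d n₁ ^ 2 / (4 * τ^2)) / C ≤ 16 * a^2 + m ^ 2 :=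
      (div_le_iff₀ hC0).mpr (by linarith [hxy])
    have := Real.rpow_le_rpow_of_nonpos hdivpos hle (by linarith : -ρ - β ≤ 0)
    calc (16 * a^2 + m ^ 2) ^ (-ρ - β)
        ≤ ((16 * (1:ℝ)^2 + d n₁ ^ 2 / (4 * τ^2)) / C) ^ (-ρ - β) := this
      _ = C ^ (β + ρ) * (16 * (1:ℝ)^2 + d n₁ ^ 2 / (4 * τ^2)) ^ (-β - ρ) := by
          rw [show (-ρ - β : ℝ) = -(β + ρ) by ring, show (-β - ρ : ℝ) = -(β + ρ) by ring,
            Real.div_rpow hx.le hC0.le, Real.rpow_neg hC0.le (β + ρ), div_inv_eq_mul,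
            mul_comm]
    -- note: structure above
  -- integral chain
  have step1 : (∫⁻ n₁ in {n₁ | δ ≤ d n₁},
        ENNReal.ofReal ((16 * a^2 + d (mul (inv n₁) n) ^ 2) ^ (-ρ - β)) ∂μ) ≤
      ENNReal.ofReal (C ^ (β + ρ)) *
        ∫⁻ n₁ in {n₁ | δ ≤ d n₁},
          ENNReal.ofReal ((16 * (1:ℝ)^2 + d n₁ ^ 2 / (4 * τ^2)) ^ (-β - ρ)) ∂μ := by
    rw [← lintegral_const_mul' _ _ ENNReal.ofReal_ne_top]
    refine setLIntegral_mono' hSmeas fun n₁ h₁ => ?_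
    rw [← ENNReal.ofReal_mul hCs.le]
    exact ENNReal.ofReal_le_ofReal (key n₁ h₁)
  have step2 : (∫⁻ n₁ in {n₁ | δ ≤ d n₁},
        ENNReal.ofReal ((16 * (1:ℝ)^2 + d n₁ ^ 2 / (4 * τ^2)) ^ (-β - ρ)) ∂μ) ≤ J :=
    setLIntegral_le_lintegral _ _
  have hJof : J = ENNReal.ofReal Mr := (ENNReal.ofReal_toReal hJ.ne).symm
  have hfinal : a ^ (2 * β) * (C ^ (β + ρ) * Mr) < ε := by
    have h2β : (0:ℝ) < 2 * β := by linarith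
    have ha2 : a ^ (2 * β) < ε / (C ^ (β + ρ) * (Mr + 1)) := by
      have h1 : a ^ (2 * β) < a₀ ^ (2 * β) :=
        Real.rpow_lt_rpow ha.le haa₀ h2β
      have h2 : a₀ ^ (2 * β) = ε / (C ^ (β + ρ) * (Mr + 1)) := by
        rw [ha₀def, ← Real.rpow_mul (by positivity)]
        rw [show (1 / (2 * β)) * (2 * β) = 1 by field_simp]
        exact Real.rpow_one _
      rwa [h2] at h1
    have hpos : (0:ℝ) < C ^ (β + ρ) * (Mr + 1) := by positivity
    calc a ^ (2 * β) * (C ^ (β + ρ) * Mr)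
        ≤ (ε / (C ^ (β + ρ) * (Mr + 1))) * (C ^ (β + ρ) * Mr) :=
          mul_le_mul_of_nonneg_right ha2.le (by positivity)
      _ < ε := by
          rw [div_mul_eq_mul_div, div_lt_iff₀ hpos]
          exact mul_lt_mul_of_pos_left
            (mul_lt_mul_of_pos_left (lt_add_one Mr) hCs) hε
  calc ENNReal.ofReal (a ^ (2 * β)) *
        (∫⁻ n₁ in {n₁ | δ ≤ d n₁},
          ENNReal.ofReal ((16 * a^2 + d (mul (inv n₁) n) ^ 2) ^ (-ρ - β)) ∂μ)
      ≤ ENNReal.ofReal (a ^ (2 * β)) * (ENNReal.ofReal (C ^ (β + ρ)) * J) := by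
        refine mul_le_mul_right (step1.trans ?_) _
        exact mul_le_mul_right step2 _
    _ = ENNReal.ofReal (a ^ (2 * β) * (C ^ (β + ρ) * Mr)) := by
        rw [hJof, ← ENNReal.ofReal_mul hCs.le,
          ← ENNReal.ofReal_mul (Real.rpow_nonneg ha.le _)]
    _ < ENNReal.ofReal ε := by
        exact (ENNReal.ofReal_lt_ofReal_iff hε).mpr hfinal
end

section
/- Let β > 0, ρ = Q/2 with Q = p+k, α > 0. There exists a constant C = C(α,β,τ,Q) > 0 such that for every nonnegative Radon measure μ on N, every n₀ ∈ N, every a > 0, every ω ∈ S^{2p−1}, ζ ∈ S^{k−1}, θ ∈ [0,2π): C · μ(B(n₀,a))/m(B(n₀,a)) ≤ c_β a^{2β} ∫_N (16a² + 8a‖X(n₀ s_a) − X₁‖² + d((X₁,Z₁)⁻¹ n₀ s_a)²)^{−ρ−β} dμ(X₁,Z₁), where s_a = (√(αa|cosθ|)ω, ¼αa|sinθ|ζ), c_β > 0 is a fixed constant, B(n,r) = {n₁ : d(n₁⁻¹n) < r}, and X(·) denotes the ℝ^{2p}-component. -/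
/-! On the gauge ball `B(n₀, a)` the quasi-triangle inequality and `d(s_a) = αa` give
`d(n₁⁻¹ n₀ s_a) ≤ τ(1 + α)a`; as moreover `‖X(n₀ s_a) − X₁‖² ≤ d(n₁⁻¹ n₀ s_a)`, the integrand is at
least `((τ(1 + α) + 4)a)^(-2ρ-2β)` on the ball. Conversely the ball contains, above every `X` with
`‖X − X(n₀)‖ < √a/2`, a ball of radius `a/8` in the centre, so `m(B(n₀, a)) ≳ a^(p+k) = a^(2ρ)`,
and the powers of `a` cancel. -/

open MeasureTheory

open scoped ENNReal

theorem MeasureTheory.Measure.measure_mul_le_prod_apply {α β : Type*} [MeasurableSpace α]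
    [MeasurableSpace β] {μ : Measure α} {ν : Measure β} [SFinite ν] {s : Set (α × β)}
    (hs : MeasurableSet s) {A : Set α} (hA : MeasurableSet A) {c : ℝ≥0∞}
    (h : ∀ x ∈ A, c ≤ ν (Prod.mk x ⁻¹' s)) : c * μ A ≤ μ.prod ν s := by
  rw [Measure.prod_apply hs, ← setLIntegral_const]
  exact (setLIntegral_mono' hA h).trans (setLIntegral_le_lintegral _ _)

theorem MeasureTheory.const_mul_measure_le_lintegral {α : Type*} [MeasurableSpace α]
    {μ : Measure α} {s : Set α} (hs : MeasurableSet s) {c : ℝ≥0∞} {f : α → ℝ≥0∞}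
    (h : ∀ x ∈ s, c ≤ f x) : c * μ s ≤ ∫⁻ x, f x ∂μ := by
  rw [← setLIntegral_const]
  exact (setLIntegral_mono' hs h).trans (setLIntegral_le_lintegral _ _)

theorem Real.rpow_two_mul_mul_rpow_mul_sq {a K : ℝ} (ha : 0 < a) (hK : 0 ≤ K) (ρ β : ℝ) :
    a ^ (2 * β) * (K * a ^ 2) ^ (-ρ - β) = K ^ (-ρ - β) / a ^ (2 * ρ) := by
  rw [Real.mul_rpow hK (by positivity), ← Real.rpow_natCast a 2, ← Real.rpow_mul ha.le,
    div_eq_mul_inv, ← Real.rpow_neg ha.le, mul_left_comm, ← Real.rpow_add ha]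
  congr 2
  push_cast
  ring

theorem ENNReal.ofReal_mul_div_le_ofReal_div_mul {C w : ℝ} (hw : 0 < w) {v : ℝ≥0∞}
    (hv : ENNReal.ofReal w ≤ v) (x : ℝ≥0∞) :
    ENNReal.ofReal C * (x / v) ≤ ENNReal.ofReal (C / w) * x := by
  calc ENNReal.ofReal C * (x / v) ≤ ENNReal.ofReal C * (x / ENNReal.ofReal w) := by gcongr
    _ = ENNReal.ofReal (C / w) * x := by
      rw [ENNReal.ofReal_div_of_pos hw]
      simp only [div_eq_mul_inv]
      ring

noncomputable section

namespace HType

section Group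

variable {E F : Type*} [AddCommGroup E] [Module ℝ E] [AddCommGroup F] [Module ℝ F]
  (B : E →ₗ[ℝ] E →ₗ[ℝ] F)

def mul (n n' : E × F) : E × F := (n.1 + n'.1, n.2 + n'.2 + (1 / 2 : ℝ) • B n.1 n'.1)

@[simp] theorem fst_mul (n n' : E × F) : (mul B n n').1 = n.1 + n'.1 := rfl

theorem mul_assoc (n n' n'' : E × F) : mul B (mul B n n') n'' = mul B n (mul B n' n'') := by
  simp only [mul, map_add, LinearMap.add_apply, smul_add, Prod.mk.injEq]
  constructor <;> abel

end Group

section Gauge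

variable {E F : Type*} [NormedAddCommGroup E] [NormedAddCommGroup F]

def hnorm (n : E × F) : ℝ := Real.sqrt (‖n.1‖ ^ 4 + 16 * ‖n.2‖ ^ 2)

theorem hnorm_nonneg (n : E × F) : 0 ≤ hnorm n := Real.sqrt_nonneg _

theorem sq_norm_fst_le_hnorm (n : E × F) : ‖n.1‖ ^ 2 ≤ hnorm n :=
  Real.le_sqrt_of_sq_le (by nlinarith [sq_nonneg ‖n.2‖])

theorem continuous_hnorm : Continuous (hnorm : E × F → ℝ) := by
  unfold hnorm
  fun_prop

theorem hnorm_lt {n : E × F} {a : ℝ} (ha : 0 < a) (h₁ : ‖n.1‖ < Real.sqrt a / 2)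
    (h₂ : ‖n.2‖ < a / 8) : hnorm n < a := by
  have h₁' : ‖n.1‖ ^ 2 < a / 4 := by
    calc ‖n.1‖ ^ 2 < (Real.sqrt a / 2) ^ 2 := by gcongr
      _ = a / 4 := by rw [div_pow, Real.sq_sqrt ha.le]; norm_num
  rw [hnorm, Real.sqrt_lt' ha]
  nlinarith [norm_nonneg n.1, norm_nonneg n.2]

variable [NormedSpace ℝ E] [NormedSpace ℝ F]

theorem hnorm_ray {r : ℝ} (hr : 0 ≤ r) {ω : E} (hω : ‖ω‖ = 1) {ζ : F} (hζ : ‖ζ‖ = 1) (θ : ℝ) :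
    hnorm (Real.sqrt (r * |Real.cos θ|) • ω, (1 / 4 * (r * |Real.sin θ|)) • ζ) = r := by
  have hcos : 0 ≤ r * |Real.cos θ| := by positivity
  rw [hnorm, norm_smul, norm_smul, hω, hζ, Real.norm_of_nonneg (Real.sqrt_nonneg _),
    Real.norm_of_nonneg (by positivity), mul_one, mul_one,
    show Real.sqrt (r * |Real.cos θ|) ^ 4 = (r * |Real.cos θ|) ^ 2 by
      rw [show 4 = 2 * 2 from rfl, pow_mul, Real.sq_sqrt hcos]]
  conv_rhs => rw [← Real.sqrt_sq hr]
  congr 1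
  linear_combination r ^ 2 * (sq_abs (Real.cos θ) + sq_abs (Real.sin θ) + Real.sin_sq_add_cos_sq θ)

theorem poisson_kernel_base_le {B : E →ₗ[ℝ] E →ₗ[ℝ] F} {τ α a : ℝ} (hτ : 0 ≤ τ)
    (hquasi : ∀ n n', hnorm (mul B n n') ≤ τ * (hnorm n + hnorm n')) (ha : 0 < a)
    {n₀ n₁ s : E × F} (hn₁ : hnorm (mul B (-n₁) n₀) < a) (hs : hnorm s = α * a) :
    16 * a ^ 2 + 8 * a * ‖(mul B n₀ s).1 - n₁.1‖ ^ 2 + hnorm (mul B (-n₁) (mul B n₀ s)) ^ 2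
      ≤ (τ * (1 + α) + 4) ^ 2 * a ^ 2 := by
  set D := hnorm (mul B (-n₁) (mul B n₀ s))
  have hD : D ≤ τ * (1 + α) * a := by
    calc D = hnorm (mul B (mul B (-n₁) n₀) s) := by rw [mul_assoc]
      _ ≤ τ * (hnorm (mul B (-n₁) n₀) + hnorm s) := hquasi _ _
      _ ≤ τ * (a + α * a) := by rw [hs]; gcongr
      _ = τ * (1 + α) * a := by ring
  have hX : ‖(mul B n₀ s).1 - n₁.1‖ ^ 2 ≤ D := by
    simpa only [fst_mul, Prod.fst_neg, neg_add_eq_sub] using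
      sq_norm_fst_le_hnorm (mul B (-n₁) (mul B n₀ s))
  nlinarith [hnorm_nonneg (mul B (-n₁) (mul B n₀ s))]

end Gauge

section Ball

variable {E F : Type*} [NormedAddCommGroup E] [NormedSpace ℝ E] [FiniteDimensional ℝ E]
  [NormedAddCommGroup F] [NormedSpace ℝ F] (B : E →ₗ[ℝ] E →ₗ[ℝ] F)

/-- `B(n₀, a) = {n₁ | d(n₁⁻¹ n₀) < a}`: the group inverse of `n` is `-n`. -/
def ball (n₀ : E × F) (a : ℝ) : Set (E × F) := {n₁ | hnorm (mul B (-n₁) n₀) < a}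

theorem isOpen_ball (n₀ : E × F) (a : ℝ) : IsOpen (ball B n₀ a) := by
  have hB : Continuous (B.flip n₀.1) := LinearMap.continuous_of_finiteDimensional _
  refine isOpen_lt ?_ continuous_const
  have h : Continuous fun n₁ : E × F => B (-n₁).1 n₀.1 := hB.comp (by fun_prop)
  exact continuous_hnorm.comp <| (continuous_fst.neg.add continuous_const).prodMk
    ((continuous_snd.neg.add continuous_const).add (h.const_smul _))

theorem ofReal_mul_measure_ball_le_lintegral [MeasurableSpace (E × F)]
    [OpensMeasurableSpace (E × F)] {τ α ρ β a : ℝ} (hτ : 0 ≤ τ)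
    (hquasi : ∀ n n', hnorm (mul B n n') ≤ τ * (hnorm n + hnorm n')) (hρβ : 0 ≤ ρ + β)
    (ha : 0 < a) (μ : Measure (E × F)) (n₀ : E × F) {s : E × F} (hs : hnorm s = α * a) :
    ENNReal.ofReal (((τ * (1 + α) + 4) ^ 2 * a ^ 2) ^ (-ρ - β)) * μ (ball B n₀ a)
      ≤ ∫⁻ n₁, ENNReal.ofReal ((16 * a ^ 2 + 8 * a * ‖(mul B n₀ s).1 - n₁.1‖ ^ 2
          + hnorm (mul B (-n₁) (mul B n₀ s)) ^ 2) ^ (-ρ - β)) ∂μ :=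
  const_mul_measure_le_lintegral (isOpen_ball B n₀ a).measurableSet fun _ hn₁ =>
    ENNReal.ofReal_le_ofReal <| Real.rpow_le_rpow_of_nonpos (by positivity)
      (poisson_kernel_base_le hτ hquasi ha hn₁ hs) (by linarith)

variable [FiniteDimensional ℝ F] [MeasureSpace E] [BorelSpace E]
  [(volume : Measure E).IsAddHaarMeasure] [MeasureSpace F] [BorelSpace F]
  [(volume : Measure F).IsAddHaarMeasure]

theorem volume_ball_ge (n₀ : E × F) {a : ℝ} (ha : 0 < a) :
    ENNReal.ofReal ((Real.sqrt a / 2) ^ Module.finrank ℝ E * (a / 8) ^ Module.finrank ℝ F) *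
        (volume (Metric.ball (0 : E) 1) * volume (Metric.ball (0 : F) 1))
      ≤ volume (ball B n₀ a) := by
  have hsection : ∀ x ∈ Metric.ball n₀.1 (Real.sqrt a / 2),
      ENNReal.ofReal ((a / 8) ^ Module.finrank ℝ F) * volume (Metric.ball (0 : F) 1)
        ≤ volume (Prod.mk x ⁻¹' ball B n₀ a) := by
    intro x hx
    rw [← Measure.addHaar_ball_of_pos _ (n₀.2 + (1 / 2 : ℝ) • B (-x) n₀.1) (by positivity)]
    refine measure_mono fun z hz => hnorm_lt ha ?_ ?_
    · rwa [fst_mul, Prod.fst_neg, neg_add_eq_sub, norm_sub_rev, ← dist_eq_norm]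
    · rw [Metric.mem_ball, dist_eq_norm] at hz
      rwa [show (mul B (-(x, z)) n₀).2 = -(z - (n₀.2 + (1 / 2 : ℝ) • B (-x) n₀.1)) by
        simp only [mul, Prod.fst_neg, Prod.snd_neg]; abel, norm_neg]
  calc _ = ENNReal.ofReal ((a / 8) ^ Module.finrank ℝ F) * volume (Metric.ball (0 : F) 1)
        * volume (Metric.ball n₀.1 (Real.sqrt a / 2)) := by
        rw [Measure.addHaar_ball_of_pos _ n₀.1 (by positivity), ENNReal.ofReal_mul (by positivity)]
        ring
    _ ≤ volume.prod volume (ball B n₀ a) :=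
        Measure.measure_mul_le_prod_apply (isOpen_ball B n₀ a).measurableSet
          measurableSet_ball hsection
    _ = volume (ball B n₀ a) := by rw [Measure.volume_eq_prod]

end Ball

end HType

end

theorem stmt8_general (p k : ℕ) (β ρ τ c_β : ℝ) (hβ : 0 < β) (hρ : ρ = (p + k : ℝ) / 2)
    (hτ : 1 ≤ τ) (hc_β : 0 < c_β) (α : ℝ) (hα : 0 < α)
    (B : EuclideanSpace ℝ (Fin (2*p)) →ₗ[ℝ] EuclideanSpace ℝ (Fin (2*p)) →ₗ[ℝ]
      EuclideanSpace ℝ (Fin k))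
    (mul : EuclideanSpace ℝ (Fin (2*p)) × EuclideanSpace ℝ (Fin k) →
      EuclideanSpace ℝ (Fin (2*p)) × EuclideanSpace ℝ (Fin k) →
      EuclideanSpace ℝ (Fin (2*p)) × EuclideanSpace ℝ (Fin k))
    (inv : EuclideanSpace ℝ (Fin (2*p)) × EuclideanSpace ℝ (Fin k) →
      EuclideanSpace ℝ (Fin (2*p)) × EuclideanSpace ℝ (Fin k))
    (d : EuclideanSpace ℝ (Fin (2*p)) × EuclideanSpace ℝ (Fin k) → ℝ)
    (hmul : ∀ n n', mul n n' = (n.1 + n'.1, n.2 + n'.2 + (1/2 : ℝ) • B n.1 n'.1))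
    (hinv : ∀ n, inv n = (-n.1, -n.2))
    (hd : ∀ n, d n = Real.sqrt (‖n.1‖^4 + 16 * ‖n.2‖^2))
    (hquasi : ∀ n n', d (mul n n') ≤ τ * (d n + d n')) :
    ∃ C : ℝ, 0 < C ∧
      ∀ (μ : Measure (EuclideanSpace ℝ (Fin (2*p)) × EuclideanSpace ℝ (Fin k))),
        ∀ n₀, ∀ a : ℝ, 0 < a →
        ∀ (ω : EuclideanSpace ℝ (Fin (2*p))), ‖ω‖ = 1 →
        ∀ (ζ : EuclideanSpace ℝ (Fin k)), ‖ζ‖ = 1 →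
        ∀ θ ∈ Set.Ico 0 (2 * Real.pi),
        ENNReal.ofReal C *
            (μ {n₁ | d (mul (inv n₁) n₀) < a} / volume {n₁ | d (mul (inv n₁) n₀) < a})
          ≤ ENNReal.ofReal (c_β * a ^ (2 * β)) *
            (∫⁻ n₁, ENNReal.ofReal
              ((16 * a^2
                + 8 * a * ‖(mul n₀ (Real.sqrt (α * a * |Real.cos θ|) • ω,
                    (1/4 * (α * a * |Real.sin θ|)) • ζ)).1 - n₁.1‖^2
                + d (mul (inv n₁) (mul n₀ (Real.sqrt (α * a * |Real.cos θ|) • ω,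
                    (1/4 * (α * a * |Real.sin θ|)) • ζ))) ^ 2) ^ (-ρ - β)) ∂μ) := by
  obtain rfl : mul = HType.mul B := funext₂ hmul
  obtain rfl : inv = Neg.neg := funext hinv
  obtain rfl : d = HType.hnorm := funext hd
  set K := (τ * (1 + α) + 4) ^ 2
  set U := (volume (Metric.ball (0 : EuclideanSpace ℝ (Fin (2*p))) 1)
    * volume (Metric.ball (0 : EuclideanSpace ℝ (Fin k)) 1)).toReal
  have hU : 0 < U := ENNReal.toReal_pos (ENNReal.mul_pos
      (Metric.measure_ball_pos _ _ one_pos).ne' (Metric.measure_ball_pos _ _ one_pos).ne').ne'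
    (ENNReal.mul_ne_top measure_ball_lt_top.ne measure_ball_lt_top.ne)
  refine ⟨c_β * K ^ (-ρ - β) * U / (4 ^ p * 8 ^ k), by positivity, ?_⟩
  intro μ n₀ a ha ω hω ζ hζ θ _
  set w := (Real.sqrt a / 2) ^ (2 * p) * (a / 8) ^ k * U with hw_def
  have hvol : ENNReal.ofReal w ≤ volume (HType.ball B n₀ a) := by
    have := HType.volume_ball_ge B n₀ ha
    rwa [finrank_euclideanSpace_fin, finrank_euclideanSpace_fin, ← ENNReal.ofReal_toReal
      (ENNReal.mul_ne_top measure_ball_lt_top.ne measure_ball_lt_top.ne),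
      ← ENNReal.ofReal_mul (by positivity)] at this
  have hconst : c_β * K ^ (-ρ - β) * U / (4 ^ p * 8 ^ k) / w
      = c_β * a ^ (2 * β) * (K * a ^ 2) ^ (-ρ - β) := by
    rw [mul_assoc c_β (a ^ (2 * β)), Real.rpow_two_mul_mul_rpow_mul_sq ha (by positivity),
      show 2 * ρ = ((p + k : ℕ) : ℝ) by rw [hρ]; push_cast; ring, Real.rpow_natCast, hw_def,
      pow_mul, div_pow, div_pow, div_pow, Real.sq_sqrt ha.le]
    field_simp
    ring
  have hint := HType.ofReal_mul_measure_ball_le_lintegral B (α := α) (ρ := ρ) (β := β)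
    (by linarith) hquasi (by rw [hρ]; positivity) ha μ n₀ (HType.hnorm_ray (by positivity) hω hζ θ)
  calc _ ≤ _ := ENNReal.ofReal_mul_div_le_ofReal_div_mul (by positivity) hvol _
    _ = ENNReal.ofReal (c_β * a ^ (2 * β)) * (ENNReal.ofReal ((K * a ^ 2) ^ (-ρ - β))
        * μ (HType.ball B n₀ a)) := by
      rw [hconst, ENNReal.ofReal_mul (by positivity), mul_assoc]
      rfl
    _ ≤ _ := by gcongr

/-- Lower bound for the generalized Poisson integral `𝒬_{iβ}[μ]` along rays:
there is a constant `C = C(α,β,τ,Q) > 0` such that for every nonnegative Radon measure `μ`,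
every `n₀`, `a > 0` and every ray parameter `(ω,ζ,θ)`,
`C μ(B(n₀,a))/m(B(n₀,a)) ≤ c_β a^{2β} ∫ (16a² + 8a‖X(n₀s_a) − X₁‖² + d((X₁,Z₁)⁻¹ n₀ s_a)²)^{−ρ−β} dμ`. -/
theorem stmt8 (p k : ℕ) (β ρ τ c_β : ℝ) (hβ : 0 < β) (hρ : ρ = (p + k : ℝ) / 2)
    (hτ : 1 ≤ τ) (hc_β : 0 < c_β) (α : ℝ) (hα : 0 < α)
    (B : EuclideanSpace ℝ (Fin (2*p)) →ₗ[ℝ] EuclideanSpace ℝ (Fin (2*p)) →ₗ[ℝ]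
      EuclideanSpace ℝ (Fin k))
    (hB_anti : ∀ X X', B X X' = - B X' X)
    (mul : EuclideanSpace ℝ (Fin (2*p)) × EuclideanSpace ℝ (Fin k) →
      EuclideanSpace ℝ (Fin (2*p)) × EuclideanSpace ℝ (Fin k) →
      EuclideanSpace ℝ (Fin (2*p)) × EuclideanSpace ℝ (Fin k))
    (inv : EuclideanSpace ℝ (Fin (2*p)) × EuclideanSpace ℝ (Fin k) →
      EuclideanSpace ℝ (Fin (2*p)) × EuclideanSpace ℝ (Fin k))
    (d : EuclideanSpace ℝ (Fin (2*p)) × EuclideanSpace ℝ (Fin k) → ℝ)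
    (hmul : ∀ n n', mul n n' = (n.1 + n'.1, n.2 + n'.2 + (1/2 : ℝ) • B n.1 n'.1))
    (hinv : ∀ n, inv n = (-n.1, -n.2))
    (hd : ∀ n, d n = Real.sqrt (‖n.1‖^4 + 16 * ‖n.2‖^2))
    (hquasi : ∀ n n', d (mul n n') ≤ τ * (d n + d n')) :
    ∃ C : ℝ, 0 < C ∧
      ∀ (μ : Measure (EuclideanSpace ℝ (Fin (2*p)) × EuclideanSpace ℝ (Fin k))),
        ∀ n₀, ∀ a : ℝ, 0 < a →
        ∀ (ω : EuclideanSpace ℝ (Fin (2*p))), ‖ω‖ = 1 →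
        ∀ (ζ : EuclideanSpace ℝ (Fin k)), ‖ζ‖ = 1 →
        ∀ θ ∈ Set.Ico 0 (2 * Real.pi),
        ENNReal.ofReal C *
            (μ {n₁ | d (mul (inv n₁) n₀) < a} / volume {n₁ | d (mul (inv n₁) n₀) < a})
          ≤ ENNReal.ofReal (c_β * a ^ (2 * β)) *
            (∫⁻ n₁, ENNReal.ofReal
              ((16 * a^2
                + 8 * a * ‖(mul n₀ (Real.sqrt (α * a * |Real.cos θ|) • ω,
                    (1/4 * (α * a * |Real.sin θ|)) • ζ)).1 - n₁.1‖^2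
                + d (mul (inv n₁) (mul n₀ (Real.sqrt (α * a * |Real.cos θ|) • ω,
                    (1/4 * (α * a * |Real.sin θ|)) • ζ))) ^ 2) ^ (-ρ - β)) ∂μ) :=
  stmt8_general p k β ρ τ c_β hβ hρ hτ hc_β α hα B mul inv d hmul hinv hd hquasi
end

section
/- Let μ be a nonnegative measure on ℝ^{l−1} and P_y(x) = c_l y / (|x|² + y²)^{l/2} the Euclidean Poisson kernel. If there exist two distinct real numbers α₁ ≠ α₂ (l = 2, boundary ℝ) such that lim_{y→0} P[μ](x₀+α₁y, y) = L₁ and lim_{y→0} P[μ](x₀+α₂y, y) = L₂ with L₁, L₂ ∈ [0,∞), then sup_{0<r<1} μ((x₀−r, x₀+r))/(2r) < ∞. -/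
open MeasureTheory Filter
open scoped ENNReal

lemma key_bound15 (μ : Measure ℝ) (x₀ α y : ℝ) (hy : 0 < y)
    (hint : Integrable (fun t => (1/Real.pi) * y / ((x₀ + α * y - t)^2 + y^2)) μ) :
    μ (Set.Ioo (x₀ - y) (x₀ + y)) ≤
      ENNReal.ofReal ((Real.pi * ((|α| + 1)^2 + 1) * y) *
        ∫ t, (1/Real.pi) * y / ((x₀ + α * y - t)^2 + y^2) ∂μ) := by
  set x := x₀ + α * y with hx
  set K := (|α| + 1)^2 + 1 with hK
  have hKpos : 0 < K := by positivity
  have hc : 0 ≤ Real.pi * K * y := by positivity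
  set f : ℝ → ℝ := fun t => (1/Real.pi) * y / ((x - t)^2 + y^2) with hf
  have hfpos : ∀ t, 0 ≤ f t := by
    intro t
    have h1 : 0 < (x - t)^2 + y^2 := by positivity
    have h2 : (0:ℝ) < Real.pi := Real.pi_pos
    positivity
  have h1 : ∀ t ∈ Set.Ioo (x₀ - y) (x₀ + y),
      (1 : ℝ≥0∞) ≤ ENNReal.ofReal ((Real.pi * K * y) * f t) := by
    intro t ht
    have habs : |x - t| ≤ (|α| + 1) * y := by
      have hxt : x - t = α * y + (x₀ - t) := by rw [hx]; ring
      have h2 : |x₀ - t| ≤ y := by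
        rw [abs_le]
        constructor
        · linarith [ht.2]
        · linarith [ht.1]
      calc |x - t| = |α * y + (x₀ - t)| := by rw [hxt]
        _ ≤ |α * y| + |x₀ - t| := abs_add_le _ _
        _ ≤ |α| * y + y := by rw [abs_mul, abs_of_pos hy]; linarith
        _ = (|α| + 1) * y := by ring
    have hDpos : 0 < (x - t)^2 + y^2 := by positivity
    have hD : (x - t)^2 + y^2 ≤ K * y^2 := by
      have hs := sq_abs (x - t)
      nlinarith [abs_nonneg (x - t), mul_self_nonneg ((|α| + 1) * y)]
    have heq : (Real.pi * K * y) * f t = (K * y^2) / ((x - t)^2 + y^2) := by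
      rw [hf]
      field_simp
    rw [ENNReal.one_le_ofReal, heq, le_div_iff₀ hDpos, one_mul]
    exact hD
  calc μ (Set.Ioo (x₀ - y) (x₀ + y))
      = ∫⁻ _ in Set.Ioo (x₀ - y) (x₀ + y), 1 ∂μ := (setLIntegral_one _).symm
    _ ≤ ∫⁻ t in Set.Ioo (x₀ - y) (x₀ + y), ENNReal.ofReal ((Real.pi * K * y) * f t) ∂μ := by
        refine setLIntegral_mono (by fun_prop) h1
    _ ≤ ∫⁻ t, ENNReal.ofReal ((Real.pi * K * y) * f t) ∂μ := setLIntegral_le_lintegral _ _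
    _ = ∫⁻ t, ENNReal.ofReal (Real.pi * K * y) * ENNReal.ofReal (f t) ∂μ := by
        simp only [ENNReal.ofReal_mul hc]
    _ = ENNReal.ofReal (Real.pi * K * y) * ∫⁻ t, ENNReal.ofReal (f t) ∂μ :=
        lintegral_const_mul _ (by fun_prop)
    _ = ENNReal.ofReal (Real.pi * K * y) * ENNReal.ofReal (∫ t, f t ∂μ) := by
        rw [ofReal_integral_eq_lintegral_ofReal hint (ae_of_all _ hfpos)]
    _ = ENNReal.ofReal ((Real.pi * K * y) * ∫ t, f t ∂μ) := (ENNReal.ofReal_mul hc).symm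

/-- If the Poisson integral `P[μ]` of a nonnegative measure `μ` on `ℝ`
has finite radial limits `L₁, L₂ ∈ [0,∞)` along two distinct rays `x₀ + α₁y`, `x₀ + α₂y`
(at a boundary point `x₀`), then `sup_{0<r<1} μ((x₀−r,x₀+r))/(2r) < ∞`. -/
theorem stmt15 (μ : Measure ℝ) (x₀ α₁ α₂ L₁ L₂ : ℝ)
    (hα : α₁ ≠ α₂) (hL₁ : 0 ≤ L₁) (hL₂ : 0 ≤ L₂)
    (P : ℝ → ℝ → ℝ)
    (hP : ∀ x y, P x y = ∫ t, (1/Real.pi) * y / ((x - t)^2 + y^2) ∂μ)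
    (hint : ∀ x y : ℝ, 0 < y → Integrable (fun t => (1/Real.pi) * y / ((x - t)^2 + y^2)) μ)
    (h₁ : Tendsto (fun y => P (x₀ + α₁ * y) y) (nhdsWithin 0 (Set.Ioi 0)) (nhds L₁))
    (h₂ : Tendsto (fun y => P (x₀ + α₂ * y) y) (nhdsWithin 0 (Set.Ioi 0)) (nhds L₂)) :
    ∃ M : ℝ, ∀ r : ℝ, 0 < r → r < 1 →
      μ (Set.Ioo (x₀ - r) (x₀ + r)) ≤ ENNReal.ofReal (M * (2 * r)) := by
  set K := (|α₁| + 1)^2 + 1 with hK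
  have hKpos : 0 < K := by positivity
  -- eventual bound on P along the first ray
  have hev : ∀ᶠ y in nhdsWithin 0 (Set.Ioi 0), P (x₀ + α₁ * y) y < L₁ + 1 :=
    h₁.eventually (eventually_lt_nhds (by linarith))
  obtain ⟨u, hu, hsub⟩ := mem_nhdsGT_iff_exists_Ioo_subset.mp hev
  have hu0 : (0:ℝ) < u := hu
  set y₀ := min u 1 with hy₀
  have hy₀pos : 0 < y₀ := lt_min hu0 one_pos
  -- bound at y = 1
  have hP1nonneg : 0 ≤ P (x₀ + α₁ * 1) 1 := by
    rw [hP]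
    apply integral_nonneg
    intro t
    have h1 : 0 < (x₀ + α₁ * 1 - t)^2 + 1^2 := by positivity
    have h2 : (0:ℝ) < Real.pi := Real.pi_pos
    positivity
  set C := Real.pi * K * 1 * P (x₀ + α₁ * 1) 1 with hC
  have hCnonneg : 0 ≤ C := by
    apply mul_nonneg _ hP1nonneg
    positivity
  refine ⟨max (Real.pi * K * (L₁ + 1) / 2) (C / (2 * y₀)), ?_⟩
  intro r hr0 hr1
  have hM1 : Real.pi * K * (L₁ + 1) / 2 ≤ max (Real.pi * K * (L₁ + 1) / 2) (C / (2 * y₀)) :=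
    le_max_left _ _
  have hM2 : C / (2 * y₀) ≤ max (Real.pi * K * (L₁ + 1) / 2) (C / (2 * y₀)) :=
    le_max_right _ _
  by_cases hcase : r < y₀
  · -- small r: use the ray bound
    have hbound := key_bound15 μ x₀ α₁ r hr0 (hint _ r hr0)
    rw [← hP, ← hK] at hbound
    have hPr : P (x₀ + α₁ * r) r < L₁ + 1 := by
      apply hsub
      exact ⟨hr0, lt_of_lt_of_le hcase (min_le_left _ _)⟩
    refine le_trans hbound (ENNReal.ofReal_le_ofReal ?_)
    have h1 : Real.pi * K * r * P (x₀ + α₁ * r) r ≤ Real.pi * K * r * (L₁ + 1) := by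
      apply mul_le_mul_of_nonneg_left (le_of_lt hPr)
      positivity
    have h2 : Real.pi * K * r * (L₁ + 1) = (Real.pi * K * (L₁ + 1) / 2) * (2 * r) := by ring
    have h3 : (Real.pi * K * (L₁ + 1) / 2) * (2 * r) ≤
        max (Real.pi * K * (L₁ + 1) / 2) (C / (2 * y₀)) * (2 * r) := by
      apply mul_le_mul_of_nonneg_right hM1
      linarith
    exact le_trans h1 (le_trans (le_of_eq h2) h3)
  · -- large r: use the bound at y = 1
    push_neg at hcase
    have hbound := key_bound15 μ x₀ α₁ 1 one_pos (hint _ 1 one_pos)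
    rw [← hP, ← hK] at hbound
    have hmono : μ (Set.Ioo (x₀ - r) (x₀ + r)) ≤ μ (Set.Ioo (x₀ - 1) (x₀ + 1)) := by
      apply measure_mono
      apply Set.Ioo_subset_Ioo <;> linarith
    refine le_trans hmono (le_trans hbound (ENNReal.ofReal_le_ofReal ?_))
    rw [← hC]
    have h4 : C = (C / (2 * y₀)) * (2 * y₀) := by
      field_simp
    calc C = (C / (2 * y₀)) * (2 * y₀) := h4
      _ ≤ (C / (2 * y₀)) * (2 * r) := by
          apply mul_le_mul_of_nonneg_left (by linarith) (by positivity)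
      _ ≤ max (Real.pi * K * (L₁ + 1) / 2) (C / (2 * y₀)) * (2 * r) := by
          apply mul_le_mul_of_nonneg_right hM2 (by linarith)
end
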